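/- Suppose D satisfies Conditions (A) and (B), κ is a projection-Lipschitz constant for D, U is a penalty function for D with constant L, w : [0,T] → ℝ^d is α-Hölder continuous with w₀ = 0, x₀ ∈ D̄, and m ≥ 1 is an integer with 0 < ε_m^α(w) < min(δ/(180 β λ(w)), r₀/2). Then for every n ≥ 1 and all s, t with T_{m,n−1} ≤ s ≤ t ≤ T_{m,n} (whenever these stopping times are defined in [0,T]), the total variation of φ^m over [s,t] satisfies |φ^m|_t − |φ^m|_s ≤ β · (Δ_{s,t}(ξ^m) + Δ_{s,t}(w)). -/

import Mathlib

open Set Metric MeasureTheory Filter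

noncomputable section

abbrev Euc (d : ℕ) := EuclideanSpace ℝ (Fin d)

/-- The set 𝒩_{x,r} of inward unit normals at `x` with radius `r`. -/
def nset {d : ℕ} (D : Set (Euc d)) (x : Euc d) (r : ℝ) : Set (Euc d) :=
  {n : Euc d | ‖n‖ = 1 ∧ Metric.ball (x - r • n) r ∩ D = ∅}

/-- The set 𝒩_x = ⋃_{r>0} 𝒩_{x,r}. -/
def nsetAll {d : ℕ} (D : Set (Euc d)) (x : Euc d) : Set (Euc d) :=
  ⋃ r ∈ Set.Ioi (0 : ℝ), nset D x r

/-- Condition (A): uniform exterior sphere condition with radius `r₀`. -/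
def CondA {d : ℕ} (D : Set (Euc d)) (r₀ : ℝ) : Prop :=
  0 < r₀ ∧ ∀ x ∈ frontier D, nsetAll D x = nset D x r₀ ∧ (nset D x r₀).Nonempty

/-- Condition (B): local uniform interior cone-type condition with constants `δ`, `β`. -/
def CondB {d : ℕ} (D : Set (Euc d)) (δ β : ℝ) : Prop :=
  0 < δ ∧ 1 ≤ β ∧ ∀ x ∈ frontier D, ∃ l : Euc d, ‖l‖ = 1 ∧
    ∀ y ∈ Metric.ball x δ ∩ frontier D, ∀ n ∈ nsetAll D y, (1 / β : ℝ) ≤ inner ℝ l n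

/-- A penalty function `U` for `D` with constant `L`. -/
def IsPenalty {d : ℕ} (D : Set (Euc d)) (r₀ L : ℝ) (U : Euc d → ℝ) : Prop :=
  ContDiff ℝ 1 U ∧ (∀ x, 0 ≤ U x) ∧
  (∀ x, Metric.infDist x (closure D) ≤ r₀ / 2 →
    U x = Metric.infDist x (closure D) ^ 2) ∧
  (∃ M : ℝ, ∀ x, ‖gradient U x‖ ≤ M) ∧
  LipschitzWith (Real.toNNReal (2 * L)) (gradient U)

/-- `ξ` is the (continuous) solution of the penalized equation
`ξ_t = x₀ + w_t − (m/2)∫₀^t ∇U(ξ_s) ds` on `[0,T]`. -/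
def IsPenalizedSol {d : ℕ} (U : Euc d → ℝ) (T : ℝ) (w : ℝ → Euc d) (x₀ : Euc d) (m : ℕ)
    (ξ : ℝ → Euc d) : Prop :=
  ContinuousOn ξ (Set.Icc 0 T) ∧
  ∀ t ∈ Set.Icc 0 T, ξ t = x₀ + w t - ((m : ℝ) / 2) • ∫ s in (0 : ℝ)..t, gradient U (ξ s)

/-- `w` is `α`-Hölder on `[0,T]` with constant `C`. -/
def IsHolder {d : ℕ} (w : ℝ → Euc d) (T α C : ℝ) : Prop :=
  ∀ s t : ℝ, 0 ≤ s → s ≤ t → t ≤ T → ‖w t - w s‖ ≤ C * (t - s) ^ α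

/-- The `α`-Hölder seminorm ‖w‖_α of `w` on `[0,T]`. -/
def holderSemi {d : ℕ} (w : ℝ → Euc d) (T α : ℝ) : ℝ :=
  sSup {c : ℝ | ∃ s t : ℝ, 0 ≤ s ∧ s < t ∧ t ≤ T ∧ c = ‖w t - w s‖ / (t - s) ^ α}

/-- ε_m^α(w) = (12 e^L / m^α) ‖w‖_α. -/
def epsm {d : ℕ} (w : ℝ → Euc d) (T α L : ℝ) (m : ℕ) : ℝ :=
  12 * Real.exp L / (m : ℝ) ^ α * holderSemi w T α

/-- ‖w‖_T = sup_{0 ≤ t ≤ T} |w_t|. -/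
def supNorm {d : ℕ} (w : ℝ → Euc d) (T : ℝ) : ℝ :=
  sSup ((fun t => ‖w t‖) '' Set.Icc 0 T)

/-- The oscillation Δ_{s,t}(f) = sup{ |f_{t₂} − f_{t₁}| : s ≤ t₁ < t₂ ≤ t }. -/
def osc {d : ℕ} (f : ℝ → Euc d) (s t : ℝ) : ℝ :=
  sSup {c : ℝ | ∃ u v : ℝ, s ≤ u ∧ u < v ∧ v ≤ t ∧ c = ‖f v - f u‖}

/-- `(ξ, φ)` solves the Skorokhod problem `ξ_t = x₀ + w_t + φ_t` on `[0,T]` for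
the domain `D`. -/
def IsSkorokhod {d : ℕ} (D : Set (Euc d)) (T : ℝ) (w : ℝ → Euc d) (x₀ : Euc d)
    (ξ φ : ℝ → Euc d) : Prop :=
  (∀ t ∈ Set.Icc 0 T, ξ t = x₀ + w t + φ t) ∧
  ContinuousOn ξ (Set.Icc 0 T) ∧ (∀ t ∈ Set.Icc 0 T, ξ t ∈ closure D) ∧
  ContinuousOn φ (Set.Icc 0 T) ∧ φ 0 = 0 ∧
  BoundedVariationOn φ (Set.Icc 0 T) ∧
  ∃ S : StieltjesFunction ℝ, (∀ t ∈ Set.Icc 0 T, S t = variationOnFromTo φ (Set.Icc 0 T) 0 t) ∧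
    ∃ nv : ℝ → Euc d, Measurable nv ∧
      (∀ t ∈ Set.Icc 0 T, φ t = ∫ s in Set.Icc 0 t, nv s ∂S.measure) ∧
      (∀ s ∈ Set.Icc 0 T, ξ s ∈ frontier D → nv s ∈ nsetAll D (ξ s)) ∧
      (∀ t ∈ Set.Icc 0 T, variationOnFromTo φ (Set.Icc 0 T) 0 t
          = (S.measure {s | s ∈ Set.Icc 0 t ∧ ξ s ∈ frontier D}).toReal)

/-!
Between `T_{m,n-1}` and `T_{m,n}` the force `-∇U(ξ)` vanishes while `ξ ∈ D̄`; otherwise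
`-∇U(ξ) = 2 (ξ̄ - ξ)` is a positive multiple of an inward normal at `ξ̄ ∈ ∂D`, and up to `T_{m,n}`
every such `ξ̄` lies within `δ / 2` of `ξ̄_{T_{m,n-1}}`. Condition (B) therefore puts all these
forces in one cone `{v : |v| ≤ β ⟪l, v⟫}` with `|l| ≤ 1`, whence
`|φ|_t - |φ|_s = ∫ₛᵗ |dφ| ≤ β ⟪l, φ_t - φ_s⟫ ≤ β |φ_t - φ_s|`, and
`φ_t - φ_s = (ξ_t - ξ_s) - (w_t - w_s)`.

The gradient formula needs `ξ` within `r₀ / 2` of `D̄`. This a priori bound comes from a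
Grönwall estimate for `U` along `ξ` with the noise increment removed: over a window of length
`2 / m` the penalization shrinks the distance to `D̄` by the factor `e⁻¹`, while
`ε_m^α(w) < r₀ / 2` keeps the contribution of the noise below `r₀ / 16`.
-/

open scoped Topology RealInnerProductSpace

section General

variable {F : Type*} [NormedAddCommGroup F]

theorem HasGradientAt.hasDerivAt_comp [InnerProductSpace ℝ F] [CompleteSpace F]
    {f : F → ℝ} {g : F} {γ : ℝ → F} {γ' : F} {t : ℝ}
    (hf : HasGradientAt f g (γ t)) (hγ : HasDerivAt γ γ' t) :
    HasDerivAt (fun s => f (γ s)) ⟪g, γ'⟫ t :=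
  (hasGradientAt_iff_hasFDerivAt.1 hf).comp_hasDerivAt t hγ

theorem ContDiff.continuous_gradient [InnerProductSpace ℝ F] [CompleteSpace F] {f : F → ℝ}
    (hf : ContDiff ℝ 1 f) : Continuous (gradient f) :=
  (InnerProductSpace.toDual ℝ F).symm.continuous.comp (hf.continuous_fderiv one_ne_zero)

theorem HasDerivAt.le_of_eventually_le_add_sq {φ : ℝ → ℝ} {a b c : ℝ} (hφ : HasDerivAt φ a 0)
    (h : ∀ᶠ s in 𝓝[>] 0, φ s ≤ φ 0 + b * s + c * s ^ 2) : a ≤ b := by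
  have hslope : Tendsto (slope φ 0) (𝓝[>] 0) (𝓝 a) :=
    hφ.tendsto_slope_zero_right.congr fun s => by simp [slope_def_field, div_eq_inv_mul]
  have hlin : Tendsto (fun s : ℝ => b + c * s) (𝓝[>] 0) (𝓝 b) :=
    ((by fun_prop : Continuous fun s : ℝ => b + c * s).tendsto' 0 b (by simp)).mono_left
      nhdsWithin_le_nhds
  refine le_of_tendsto_of_tendsto hslope hlin ?_
  filter_upwards [h, self_mem_nhdsWithin] with s hs (hs0 : 0 < s)
  rw [slope_def_field, sub_zero, div_le_iff₀ hs0]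
  nlinarith

theorem tendsto_add_smul_nhdsWithin_zero [NormedSpace ℝ F] (x v : F) (s : Set ℝ) :
    Tendsto (fun t : ℝ => x + t • v) (𝓝[s] 0) (𝓝 x) :=
  ((continuous_const.add (continuous_id.smul continuous_const)).tendsto' 0 x
    (by simp)).mono_left nhdsWithin_le_nhds

theorem gradient_eq_two_smul_of_eventuallyEq_infDist_sq [InnerProductSpace ℝ F] [CompleteSpace F]
    {f : F → ℝ} {S : Set F} {x p : F} (hf : DifferentiableAt ℝ f x)
    (hfS : ∀ᶠ y in 𝓝 x, f y = infDist y S ^ 2) (hp : p ∈ S) (hxp : dist x p = infDist x S) :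
    gradient f x = (2 : ℝ) • (x - p) := by
  set ρ := infDist x S
  set g := gradient f x
  have hρ : 0 ≤ ρ := infDist_nonneg
  have hray (v : F) : HasDerivAt (fun s : ℝ => f (x + s • v)) ⟪g, v⟫ 0 :=
    HasGradientAt.hasDerivAt_comp (by rw [zero_smul, add_zero]; exact hf.hasGradientAt)
      (by simpa using ((hasDerivAt_id (0 : ℝ)).smul_const v).const_add x)
  have hfray (v : F) : ∀ᶠ s in 𝓝[>] (0 : ℝ), f (x + s • v) = infDist (x + s • v) S ^ 2 :=
    (tendsto_add_smul_nhdsWithin_zero x v _).eventually hfS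
  have hf0 (v : F) : f (x + (0 : ℝ) • v) = ρ ^ 2 := by simpa using hfS.self_of_nhds
  -- `infDist · S` is 1-Lipschitz, and decreases at unit speed towards the nearest point `p`
  have hupper (v : F) : ⟪g, v⟫ ≤ 2 * ρ * ‖v‖ := by
    refine (hray v).le_of_eventually_le_add_sq (c := ‖v‖ ^ 2) ?_
    filter_upwards [hfray v, self_mem_nhdsWithin] with s hs (hs0 : 0 < s)
    have hdist : infDist (x + s • v) S ≤ ρ + s * ‖v‖ := by
      simpa [dist_eq_norm, norm_smul, abs_of_pos hs0] using
        infDist_le_infDist_add_dist (x := x + s • v) (y := x) (s := S)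
    rw [hs, hf0]
    nlinarith [infDist_nonneg (x := x + s • v) (s := S)]
  have hlower : ⟪g, p - x⟫ ≤ -2 * ρ ^ 2 := by
    refine (hray (p - x)).le_of_eventually_le_add_sq (c := ρ ^ 2) ?_
    filter_upwards [hfray (p - x), Ioo_mem_nhdsGT one_pos] with s hs ⟨hs0, hs1⟩
    have hdist : infDist (x + s • (p - x)) S ≤ (1 - s) * ρ := by
      refine (infDist_le_dist_of_mem hp).trans_eq ?_
      rw [dist_eq_norm, show x + s • (p - x) - p = (1 - s) • (x - p) by module, norm_smul,
        Real.norm_of_nonneg (by linarith), ← dist_eq_norm, hxp]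
    rw [hs, hf0]
    nlinarith [infDist_nonneg (x := x + s • (p - x)) (s := S)]
  have hg : ‖g‖ ≤ 2 * ρ := by
    have := hupper g
    rw [real_inner_self_eq_norm_sq] at this
    nlinarith [norm_nonneg g]
  have hxp' : ‖x - p‖ = ρ := by rw [← dist_eq_norm, hxp]
  have hsq : ‖g - (2 : ℝ) • (x - p)‖ ^ 2 ≤ 0 := by
    rw [norm_sub_sq_real, inner_smul_right, norm_smul, hxp', ← neg_sub p x, inner_neg_right,
      Real.norm_two]
    nlinarith [norm_nonneg g]
  rw [← sub_eq_zero, ← norm_eq_zero]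
  exact pow_eq_zero_iff two_ne_zero |>.1 (le_antisymm hsq (sq_nonneg _))

theorem mem_frontier_of_dist_eq_infDist [NormedSpace ℝ F] {S : Set F} {x p : F}
    (hp : p ∈ closure S) (hxp : dist x p = infDist x S) (hpos : 0 < infDist x S) :
    p ∈ frontier S := by
  refine ⟨hp, fun hpS => ?_⟩
  have hseg : ∀ᶠ t in 𝓝[>] (0 : ℝ), p + t • (x - p) ∈ interior S :=
    (tendsto_add_smul_nhdsWithin_zero p (x - p) _).eventually (isOpen_interior.mem_nhds hpS)
  obtain ⟨t, hqS, ht0, ht1⟩ := (hseg.and (Ioo_mem_nhdsGT one_pos)).exists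
  have hclose : dist x (p + t • (x - p)) = (1 - t) * infDist x S := by
    rw [dist_eq_norm, show x - (p + t • (x - p)) = (1 - t) • (x - p) by module, norm_smul,
      Real.norm_of_nonneg (by linarith), ← dist_eq_norm, hxp]
  have := infDist_le_dist_of_mem (x := x) (interior_subset hqS)
  nlinarith

end General

section Variation

variable {F : Type*} [NormedAddCommGroup F] [InnerProductSpace ℝ F]

theorem eVariationOn_le_of_edist_le {α E E' : Type*} [LinearOrder α] [PseudoEMetricSpace E]
    [PseudoEMetricSpace E'] {f : α → E} {g : α → E'} {s : Set α}
    (h : ∀ x ∈ s, ∀ y ∈ s, edist (f x) (f y) ≤ edist (g x) (g y)) :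
    eVariationOn f s ≤ eVariationOn g s :=
  iSup_le fun p => (Finset.sum_le_sum fun _ _ => h _ (p.2.2.2 _) _ (p.2.2.2 _)).trans
    (eVariationOn.sum_le p.2.2.1 p.2.2.2)

theorem eVariationOn_Icc_le_integral_norm {φ g : ℝ → F} {a b : ℝ} (hab : a ≤ b)
    (hg : ContinuousOn g (Icc a b))
    (hφ : ∀ x ∈ Icc a b, ∀ y ∈ Icc a b, φ y - φ x = ∫ u in x..y, g u) :
    eVariationOn φ (Icc a b) ≤ ENNReal.ofReal (∫ u in a..b, ‖g u‖) := by
  set ψ : ℝ → ℝ := fun v => ∫ u in a..v, ‖g u‖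
  have hint {x y : ℝ} (hx : x ∈ Icc a b) (hy : y ∈ Icc a b) :
      IntervalIntegrable (fun u => ‖g u‖) volume x y :=
    (hg.norm.mono (uIcc_subset_Icc hx hy)).intervalIntegrable
  have ha : a ∈ Icc a b := left_mem_Icc.2 hab
  have hψ {x y : ℝ} (hx : x ∈ Icc a b) (hy : y ∈ Icc a b) :
      ψ y - ψ x = ∫ u in x..y, ‖g u‖ :=
    intervalIntegral.integral_interval_sub_left (hint ha hy) (hint ha hx)
  have hmono : MonotoneOn ψ (Icc a b) := fun x hx y hy hxy =>
    sub_nonneg.1 <| hψ hx hy ▸ intervalIntegral.integral_nonneg hxy fun _ _ => norm_nonneg _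
  calc eVariationOn φ (Icc a b) ≤ eVariationOn ψ (Icc a b) :=
        eVariationOn_le_of_edist_le fun x hx y hy => by
          rw [edist_dist, edist_dist, dist_comm, dist_eq_norm, dist_comm, Real.dist_eq,
            hφ x hx y hy, hψ hx hy]
          exact ENNReal.ofReal_le_ofReal intervalIntegral.norm_integral_le_abs_integral_norm
    _ = ENNReal.ofReal (∫ u in a..b, ‖g u‖) := by
        simpa [ψ] using hmono.eVariationOn_eq ha (right_mem_Icc.2 hab)

theorem integral_norm_le_mul_norm_integral [CompleteSpace F] {g : ℝ → F} {a b β : ℝ} {l : F}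
    (hab : a ≤ b) (hg : ContinuousOn g (Icc a b)) (hβ : 0 ≤ β) (hl : ‖l‖ ≤ 1)
    (hcone : ∀ u ∈ Ioo a b, ‖g u‖ ≤ β * ⟪l, g u⟫) :
    ∫ u in a..b, ‖g u‖ ≤ β * ‖∫ u in a..b, g u‖ := by
  have hgi : IntervalIntegrable g volume a b := hg.intervalIntegrable_of_Icc hab
  calc ∫ u in a..b, ‖g u‖ ≤ ∫ u in a..b, β * ⟪l, g u⟫ :=
        intervalIntegral.integral_mono_on_of_le_Ioo hab hgi.norm
          ((continuousOn_const.mul (continuousOn_const.inner hg)).intervalIntegrable_of_Icc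
            (μ := volume) hab)
          hcone
    _ = β * ⟪l, ∫ u in a..b, g u⟫ := by
        rw [intervalIntegral.integral_const_mul]
        simpa using congrArg (β * ·)
          ((innerSL ℝ l).intervalIntegral_comp_comm hgi)
    _ ≤ β * ‖∫ u in a..b, g u‖ := by
        gcongr
        exact (real_inner_le_norm _ _).trans (mul_le_of_le_one_left (norm_nonneg _) hl)

theorem variationOnFromTo_neg_smul_integral_le [CompleteSpace F] {G φ : ℝ → F} {c β T s t : ℝ}
    {l : F} (hG : ContinuousOn G (Icc 0 T)) (hφ : ∀ t, φ t = -(c • ∫ u in (0 : ℝ)..t, G u))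
    (hc : 0 ≤ c) (hβ : 0 ≤ β) (hl : ‖l‖ ≤ 1) (hs : 0 ≤ s) (hst : s ≤ t) (ht : t ≤ T)
    (hcone : ∀ u ∈ Ioo s t, ‖G u‖ ≤ β * ⟪l, -G u⟫) :
    variationOnFromTo φ (Icc 0 T) s t ≤ β * ‖φ t - φ s‖ := by
  have hsub : Icc s t ⊆ Icc 0 T := Icc_subset_Icc hs ht
  have hg : ContinuousOn (fun u => c • -G u) (Icc s t) := (hG.mono hsub).neg.const_smul c
  have hincr : ∀ x ∈ Icc s t, ∀ y ∈ Icc s t, φ y - φ x = ∫ u in x..y, c • -G u := by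
    intro x hx y hy
    have h0 : (0 : ℝ) ∈ Icc 0 T := ⟨le_rfl, hs.trans (hst.trans ht)⟩
    rw [hφ, hφ, intervalIntegral.integral_smul, intervalIntegral.integral_neg,
      ← intervalIntegral.integral_interval_sub_left
        ((hG.mono (uIcc_subset_Icc h0 (hsub hy))).intervalIntegrable)
        ((hG.mono (uIcc_subset_Icc h0 (hsub hx))).intervalIntegrable)]
    module
  have hcone' : ∀ u ∈ Ioo s t, ‖c • -G u‖ ≤ β * ⟪l, c • -G u⟫ := fun u hu => by
    rw [norm_smul, norm_neg, Real.norm_of_nonneg hc, inner_smul_right]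
    nlinarith [hcone u hu]
  rw [variationOnFromTo.eq_of_le _ _ hst, inter_eq_right.2 hsub,
    hincr s (left_mem_Icc.2 hst) t (right_mem_Icc.2 hst)]
  exact ENNReal.toReal_le_of_le_ofReal (by positivity)
    ((eVariationOn_Icc_le_integral_norm hst hg hincr).trans
      (ENNReal.ofReal_le_ofReal (integral_norm_le_mul_norm_integral hst hg hβ hl hcone')))

end Variation

theorem le_exp_mul_add_of_hasDerivAt {f f' : ℝ → ℝ} {a b k c : ℝ} (hab : a ≤ b) (hk : k ≠ 0)
    (hc : 0 ≤ c) (hf : ∀ x ∈ Icc a b, HasDerivAt f (f' x) x)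
    (bound : ∀ x ∈ Ico a b, f' x ≤ -k * f x + k * c) :
    f b ≤ Real.exp (-k * (b - a)) * f a + c := by
  have := le_gronwallBound_of_liminf_deriv_right_le
    (fun x hx => (hf x hx).continuousAt.continuousWithinAt)
    (fun x hx _ hr => (hf x (Ico_subset_Icc_self hx)).hasDerivWithinAt.liminf_right_slope_le hr)
    le_rfl bound b (right_mem_Icc.2 hab)
  rw [gronwallBound_of_K_ne_0 (neg_ne_zero.2 hk), show k * c / -k = -c by field_simp] at this
  nlinarith [Real.exp_pos (-k * (b - a))]

theorem exists_first_hitting {f : ℝ → ℝ} {a b c : ℝ} (hf : ContinuousOn f (Icc a b))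
    (ha : f a < c) (hb : ∃ t ∈ Icc a b, c < f t) :
    ∃ τ ∈ Ioc a b, f τ = c ∧ ∀ u ∈ Icc a τ, f u ≤ c := by
  set F := {u | u ∈ Icc a b ∧ c ≤ f u}
  obtain ⟨t, ht, hct⟩ := hb
  have hFclosed : IsClosed F := hf.preimage_isClosed_of_isClosed isClosed_Icc isClosed_Ici
  have hFbdd : BddBelow F := ⟨a, fun u hu => hu.1.1⟩
  obtain ⟨⟨haτ, hτb⟩, hcτ⟩ : sInf F ∈ F := hFclosed.csInf_mem ⟨t, ht, hct.le⟩ hFbdd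
  have haτ' : a < sInf F := haτ.lt_of_ne fun h => (h ▸ ha).not_ge hcτ
  have hbefore : ∀ u ∈ Ico a (sInf F), f u ≤ c := fun u hu =>
    not_lt.1 fun hlt => notMem_of_lt_csInf hu.2 hFbdd
      ⟨⟨hu.1, hu.2.le.trans hτb⟩, hlt.le⟩
  have hτc : f (sInf F) ≤ c := by
    refine ContinuousWithinAt.closure_le (by rw [closure_Ico haτ'.ne]; exact ⟨haτ, le_rfl⟩)
      ((hf _ ⟨haτ, hτb⟩).mono fun u hu => ⟨hu.1, hu.2.le.trans hτb⟩) continuousWithinAt_const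
      hbefore
  refine ⟨sInf F, ⟨haτ', hτb⟩, le_antisymm hτc hcτ, fun u hu => ?_⟩
  rcases hu.2.lt_or_eq with h | rfl
  · exact hbefore u ⟨hu.1, h⟩
  · exact hτc

theorem stoppingTimes_nonneg {T : ℝ} {Tm tm : ℕ → ℝ} {Q : ℝ → Prop} {P : ℕ → ℝ → Prop} {n : ℕ}
    (hT0 : Tm 0 = sInf {t | t ∈ Icc 0 T ∧ Q t})
    (htm : ∀ k, 1 ≤ k → k ≤ n → tm k = sInf {t | t ∈ Ioc (Tm (k - 1)) T ∧ P k t})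
    (hTm : ∀ k, 1 ≤ k → k ≤ n → Tm k = sInf {t | t ∈ Icc (tm k) T ∧ Q t}) :
    ∀ k ≤ n, 0 ≤ Tm k := by
  intro k
  induction k with
  | zero => exact fun _ => hT0 ▸ Real.sInf_nonneg fun t ht => ht.1.1
  | succ k ih =>
    intro hk
    have htm0 : 0 ≤ tm (k + 1) := htm (k + 1) k.succ_pos hk ▸
      Real.sInf_nonneg fun t ht => (ih (by omega)).trans ht.1.1.le
    exact hTm (k + 1) k.succ_pos hk ▸ Real.sInf_nonneg fun t ht => htm0.trans ht.1.1

/-- `τ` is the exit time of `q` from the `ρ`-ball around `q a` and `σ` the first visit to `B`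
after `τ`. -/
theorem norm_sub_lt_of_mem_before_return {E : Type*} [SeminormedAddCommGroup E] {q : ℝ → E}
    {B : Set E} {a τ σ T ρ u : ℝ} (hρ : 0 < ρ)
    (hτ : τ = sInf {t | t ∈ Ioc a T ∧ ρ ≤ ‖q t - q a‖})
    (hσ : σ = sInf {t | t ∈ Icc τ T ∧ q t ∈ B}) (hu : u ∈ Ico a σ) (huT : u ≤ T)
    (hqu : q u ∈ B) : ‖q u - q a‖ < ρ := by
  rcases lt_or_ge u τ with huτ | hτu
  · rcases hu.1.eq_or_lt with rfl | hau
    · simpa using hρ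
    · rw [hτ] at huτ
      by_contra! h
      exact notMem_of_lt_csInf huτ ⟨a, fun t ht => ht.1.1.le⟩ ⟨⟨hau, huT⟩, h⟩
  · have hσu : σ ≤ u := hσ ▸ csInf_le ⟨τ, fun t ht => ht.1.1⟩ ⟨⟨hτu, huT⟩, hqu⟩
    exact absurd hu.2 hσu.not_gt

section Penalty

variable {d : ℕ} {D : Set (Euc d)} {r₀ L : ℝ} {U : Euc d → ℝ}

theorem inv_smul_sub_mem_nsetAll {x p : Euc d} (hxp : dist x p = infDist x (closure D))
    (hpos : 0 < infDist x (closure D)) : (infDist x (closure D))⁻¹ • (p - x) ∈ nsetAll D p := by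
  set ρ := infDist x (closure D)
  refine mem_biUnion (x := ρ) hpos ⟨?_, ?_⟩
  · rw [norm_smul, norm_inv, Real.norm_of_nonneg hpos.le, ← dist_eq_norm, dist_comm, hxp,
      inv_mul_cancel₀ hpos.ne']
  · rw [smul_inv_smul₀ hpos.ne', sub_sub_cancel, eq_empty_iff_forall_notMem]
    rintro z ⟨hz, hzD⟩
    exact (mem_ball'.1 hz).not_ge (infDist_le_dist_of_mem (subset_closure hzD))

theorem IsPenalty.gradient_eq (hU : IsPenalty D r₀ L U) {x p : Euc d}
    (hx : infDist x (closure D) < r₀ / 2) (hp : p ∈ closure D)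
    (hxp : dist x p = infDist x (closure D)) : gradient U x = (2 : ℝ) • (x - p) := by
  have hnear : ∀ᶠ y in 𝓝 x, infDist y (closure D) < r₀ / 2 :=
    (continuous_infDist_pt _).continuousAt.eventually_lt continuousAt_const hx
  exact gradient_eq_two_smul_of_eventuallyEq_infDist_sq (hU.1.differentiable one_ne_zero x)
    (hnear.mono fun y hy => hU.2.2.1 y hy.le) hp hxp

theorem IsPenalty.gradient_eq_zero (hU : IsPenalty D r₀ L U) (hr₀ : 0 < r₀) {x : Euc d}
    (hx : x ∈ closure D) : gradient U x = 0 := by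
  have hx0 : infDist x (closure D) = 0 := infDist_zero_of_mem hx
  simpa using hU.gradient_eq (x := x) (by rw [hx0]; linarith) hx (by rw [hx0, dist_self])

theorem IsPenalty.norm_gradient (hU : IsPenalty D r₀ L U) (hD : (closure D).Nonempty)
    {x : Euc d} (hx : infDist x (closure D) < r₀ / 2) :
    ‖gradient U x‖ = 2 * infDist x (closure D) := by
  obtain ⟨p, hp, hxp⟩ := isClosed_closure.exists_infDist_eq_dist hD x
  rw [hU.gradient_eq hx hp hxp.symm, norm_smul, ← dist_eq_norm, ← hxp, Real.norm_two]

theorem IsPenalty.two_mul_sub_le_inner_gradient (hU : IsPenalty D r₀ L U) (hL : 0 ≤ L)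
    (hD : (closure D).Nonempty) {y z : Euc d} {b : ℝ} (hy : infDist y (closure D) < r₀ / 2)
    (hzy : dist z y ≤ b) :
    2 * U y - 2 * (L * b) ^ 2 ≤ ⟪gradient U y, gradient U z⟫ := by
  set A := gradient U y
  have hA : ‖A‖ = 2 * infDist y (closure D) := hU.norm_gradient hD hy
  have hUy : U y = infDist y (closure D) ^ 2 := hU.2.2.1 y hy.le
  have hlip : ‖gradient U z - A‖ ≤ 2 * L * b := by
    have := hU.2.2.2.2.dist_le_mul z y
    rw [Real.coe_toNNReal _ (by positivity)] at this
    rw [← dist_eq_norm]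
    nlinarith
  have hinner : ⟪A, gradient U z⟫ = ‖A‖ ^ 2 + ⟪A, gradient U z - A⟫ := by
    rw [inner_sub_right, real_inner_self_eq_norm_sq]; ring
  have hcs : -(‖A‖ * (2 * L * b)) ≤ ⟪A, gradient U z - A⟫ :=
    (neg_le_neg (mul_le_mul_of_nonneg_left hlip (norm_nonneg A))).trans
      (neg_le_of_abs_le (abs_real_inner_le_norm _ _))
  rw [hA] at hcs
  rw [hinner, hUy, hA]
  nlinarith [sq_nonneg (infDist y (closure D) - L * b)]

theorem IsPenalty.norm_gradient_le_mul_inner (hU : IsPenalty D r₀ L U) {β : ℝ} (hβ : 0 < β)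
    {x p l : Euc d} (hx : infDist x (closure D) < r₀ / 2) (hp : p ∈ closure D)
    (hxp : dist x p = infDist x (closure D)) (hpos : 0 < infDist x (closure D))
    (hl : ∀ n ∈ nsetAll D p, 1 / β ≤ ⟪l, n⟫) :
    ‖gradient U x‖ ≤ β * ⟪l, -gradient U x⟫ := by
  set ρ := infDist x (closure D)
  have hn := hl _ (inv_smul_sub_mem_nsetAll hxp hpos)
  have hgrad : -gradient U x = (2 * ρ) • (ρ⁻¹ • (p - x)) := by
    rw [hU.gradient_eq hx hp hxp, smul_smul, mul_assoc, mul_inv_cancel₀ hpos.ne', mul_one]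
    module
  rw [← norm_neg, hgrad, inner_smul_right, norm_smul, norm_smul, norm_inv,
    Real.norm_of_nonneg hpos.le, ← dist_eq_norm, dist_comm, hxp, inv_mul_cancel₀ hpos.ne',
    Real.norm_of_nonneg (by positivity)]
  rw [div_le_iff₀ hβ] at hn
  nlinarith

end Penalty

section Holder

variable {d : ℕ} {w : ℝ → Euc d} {T α : ℝ}

theorem norm_sub_le_osc {f : ℝ → Euc d} {s t : ℝ} (hst : s ≤ t)
    (hf : ∃ M, ∀ u ∈ Icc s t, ‖f u‖ ≤ M) : ‖f t - f s‖ ≤ osc f s t := by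
  rcases hst.lt_or_eq with hlt | rfl
  · obtain ⟨M, hM⟩ := hf
    refine le_csSup ⟨2 * M, ?_⟩ ⟨s, t, le_rfl, hlt, le_rfl, rfl⟩
    rintro _ ⟨u, v, hu, huv, hv, rfl⟩
    linarith [norm_sub_le (f v) (f u), hM u ⟨hu, by linarith⟩, hM v ⟨by linarith, hv⟩]
  · rw [sub_self, norm_zero]
    exact Real.sSup_nonneg (by rintro _ ⟨u, v, -, -, -, rfl⟩; exact norm_nonneg _)

theorem holderSemi_nonneg (w : ℝ → Euc d) (T α : ℝ) : 0 ≤ holderSemi w T α :=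
  Real.sSup_nonneg (by
    rintro _ ⟨s, t, -, hst, -, rfl⟩
    exact div_nonneg (norm_nonneg _) (Real.rpow_nonneg (sub_nonneg.2 hst.le) _))

theorem IsHolder.holderSemi {C : ℝ} (h : IsHolder w T α C) :
    IsHolder w T α (holderSemi w T α) := by
  intro s t hs hst htT
  rcases hst.lt_or_eq with hlt | rfl
  · rw [← div_le_iff₀ (Real.rpow_pos_of_pos (sub_pos.2 hlt) α)]
    refine le_csSup ⟨C, ?_⟩ ⟨s, t, hs, hlt, htT, rfl⟩
    rintro _ ⟨u, v, hu, huv, hv, rfl⟩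
    rw [div_le_iff₀ (Real.rpow_pos_of_pos (sub_pos.2 huv) α)]
    exact h u v hu huv.le hv
  · rw [sub_self, norm_zero]
    exact mul_nonneg (holderSemi_nonneg w T α) (Real.rpow_nonneg (sub_self s).ge α)

theorem IsHolder.norm_le {C : ℝ} (h : IsHolder w T α C) (hC : 0 ≤ C) (hα : 0 ≤ α)
    (hw0 : w 0 = 0) {u : ℝ} (hu : u ∈ Icc 0 T) : ‖w u‖ ≤ C * T ^ α := by
  simpa [hw0] using (h 0 u le_rfl hu.1 hu.2).trans
    (mul_le_mul_of_nonneg_left (Real.rpow_le_rpow (by linarith [hu.1]) (by linarith [hu.2]) hα) hC)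

theorem add_one_mul_holderSemi_le_of_epsm_lt {L r₀ : ℝ} {m : ℕ} (hα2 : α < 1 / 2) (hm : m ≠ 0)
    (hε : epsm w T α L m < r₀ / 2) :
    (L + 1) * (holderSemi w T α * (2 / m) ^ α) ≤ r₀ / 16 := by
  have hmα : 0 < (m : ℝ) ^ α := Real.rpow_pos_of_pos (Nat.cast_pos.2 (Nat.pos_of_ne_zero hm)) α
  set q := holderSemi w T α / (m : ℝ) ^ α
  have hq : 0 ≤ q := div_nonneg (holderSemi_nonneg w T α) hmα.le
  have hεq : epsm w T α L m = 12 * Real.exp L * q := by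
    simp only [epsm, q]; ring
  have h2α : (2 : ℝ) ^ α ≤ 3 / 2 := by
    have := Real.rpow_le_rpow_of_exponent_le (x := 2) one_le_two hα2.le
    rw [← Real.sqrt_eq_rpow] at this
    nlinarith [Real.sq_sqrt (zero_le_two : (0 : ℝ) ≤ 2), Real.sqrt_nonneg 2]
  have hsplit : holderSemi w T α * (2 / m) ^ α = 2 ^ α * q := by
    rw [Real.div_rpow zero_le_two (Nat.cast_nonneg m)]; ring
  rw [hsplit]
  calc (L + 1) * (2 ^ α * q) ≤ Real.exp L * (2 ^ α * q) := by
        gcongr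
        linarith [Real.add_one_le_exp L]
    _ ≤ Real.exp L * (3 / 2 * q) := by gcongr
    _ ≤ r₀ / 16 := by linarith

end Holder

section PenalizedSolution

variable {d : ℕ} {D : Set (Euc d)} {r₀ L T : ℝ} {U : Euc d → ℝ} {w : ℝ → Euc d} {x₀ : Euc d}
  {m : ℕ} {ξ : ℝ → Euc d}

theorem IsPenalizedSol.intervalIntegrable (hU : Continuous (gradient U))
    (hξ : IsPenalizedSol U T w x₀ m ξ) {u v : ℝ} (hu : u ∈ Icc 0 T) (hv : v ∈ Icc 0 T) :
    IntervalIntegrable (fun s => gradient U (ξ s)) volume u v :=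
  ((hU.comp_continuousOn hξ.1).mono (uIcc_subset_Icc hu hv)).intervalIntegrable

theorem IsPenalizedSol.sub_eq (hU : Continuous (gradient U)) (hξ : IsPenalizedSol U T w x₀ m ξ)
    {u v : ℝ} (hu : u ∈ Icc 0 T) (hv : v ∈ Icc 0 T) :
    ξ v - ξ u = (w v - w u) - ((m : ℝ) / 2) • ∫ s in u..v, gradient U (ξ s) := by
  have h0 : (0 : ℝ) ∈ Icc 0 T := ⟨le_rfl, hu.1.trans hu.2⟩
  rw [hξ.2 v hv, hξ.2 u hu, ← intervalIntegral.integral_interval_sub_left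
    (hξ.intervalIntegrable hU h0 hv) (hξ.intervalIntegrable hU h0 hu), smul_sub]
  abel

theorem IsPenalizedSol.apply_zero (hξ : IsPenalizedSol U T w x₀ m ξ) (hT : 0 ≤ T)
    (hw0 : w 0 = 0) : ξ 0 = x₀ := by
  simpa [hw0] using hξ.2 0 ⟨le_rfl, hT⟩

theorem IsPenalizedSol.exists_hasDerivAt_sub_noise (hU : Continuous (gradient U))
    (hξ : IsPenalizedSol U T w x₀ m ξ) {r : ℝ} (hr : r ∈ Icc 0 T) :
    ∃ P P' : ℝ → Euc d, (∀ u, HasDerivAt P (P' u) u) ∧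
      ∀ u ∈ Icc r T, P u = ξ u - (w u - w r) ∧ P' u = -(((m : ℝ) / 2) • gradient U (ξ u)) := by
  have hT : 0 ≤ T := hr.1.trans hr.2
  -- extend `∇U ∘ ξ` continuously to `ℝ` so that the integral has a derivative everywhere
  set g : ℝ → Euc d := fun u => gradient U (ξ (projIcc 0 T hT u))
  have hgc : Continuous g := hU.comp <| hξ.1.comp_continuous
    (continuous_subtype_val.comp continuous_projIcc) fun u => (projIcc 0 T hT u).2
  have hg (u : ℝ) (hu : u ∈ Icc 0 T) : g u = gradient U (ξ u) := by
    simp [g, projIcc_of_mem hT hu]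
  refine ⟨fun u => ξ r - ((m : ℝ) / 2) • ∫ s in r..u, g s, fun u => -(((m : ℝ) / 2) • g u),
    fun u => ((hgc.integral_hasStrictDerivAt r u).hasDerivAt.const_smul ((m : ℝ) / 2)).const_sub
      (ξ r), fun u hu => ⟨?_, by simp only [hg u ⟨hr.1.trans hu.1, hu.2⟩]⟩⟩
  have hint : ∫ s in r..u, g s = ∫ s in r..u, gradient U (ξ s) :=
    intervalIntegral.integral_congr fun s hs => by
      rw [uIcc_of_le hu.1] at hs
      exact hg s ⟨hr.1.trans hs.1, hs.2.trans hu.2⟩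
  have h := hξ.sub_eq hU hr ⟨hr.1.trans hu.1, hu.2⟩
  simp only [hint]
  linear_combination (norm := module) -h

theorem IsPenalizedSol.infDist_le_exp_mul_add (hU : IsPenalty D r₀ L U) (hL : 0 ≤ L)
    (hD : (closure D).Nonempty) (hm : m ≠ 0) (hξ : IsPenalizedSol U T w x₀ m ξ) {r τ b : ℝ}
    (hr : 0 ≤ r) (hrτ : r ≤ τ) (hτ : τ ≤ T)
    (hnear : ∀ u ∈ Icc r τ, infDist (ξ u) (closure D) ≤ r₀ / 4)
    (hw : ∀ u ∈ Icc r τ, ‖w u - w r‖ ≤ b) (hb : b < r₀ / 4) :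
    infDist (ξ τ) (closure D) ≤
      Real.exp (-(m * (τ - r)) / 2) * infDist (ξ r) (closure D) + (L + 1) * b := by
  have hrr : r ∈ Icc r τ := left_mem_Icc.2 hrτ
  have hττ : τ ∈ Icc r τ := right_mem_Icc.2 hrτ
  have hb0 : 0 ≤ b := by simpa using hw r hrr
  obtain ⟨P, P', hP, hPξ⟩ :=
    hξ.exists_hasDerivAt_sub_noise hU.1.continuous_gradient ⟨hr, hrτ.trans hτ⟩
  have hPξ' (u : ℝ) (hu : u ∈ Icc r τ) := hPξ u ⟨hu.1, hu.2.trans hτ⟩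
  have hPdist (u : ℝ) (hu : u ∈ Icc r τ) : dist (ξ u) (P u) ≤ b := by
    rw [(hPξ' u hu).1, dist_eq_norm, sub_sub_cancel]
    exact hw u hu
  have hPnear (u : ℝ) (hu : u ∈ Icc r τ) : infDist (P u) (closure D) < r₀ / 2 := by
    have := infDist_le_infDist_add_dist (x := P u) (y := ξ u) (s := closure D)
    linarith [hnear u hu, hPdist u hu, dist_comm (P u) (ξ u)]
  have hG (u : ℝ) : HasDerivAt (fun v => U (P v)) ⟪gradient U (P u), P' u⟫ u :=
    (hU.1.differentiable one_ne_zero (P u)).hasGradientAt.hasDerivAt_comp (hP u)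
  have hGbound (u : ℝ) (hu : u ∈ Ico r τ) :
      ⟪gradient U (P u), P' u⟫ ≤ -(m : ℝ) * U (P u) + m * (L * b) ^ 2 := by
    have hu' := Ico_subset_Icc_self hu
    have := hU.two_mul_sub_le_inner_gradient hL hD (hPnear u hu') (hPdist u hu')
    rw [(hPξ' u hu').2, inner_neg_right, inner_smul_right]
    nlinarith [(Nat.cast_nonneg m : (0 : ℝ) ≤ m)]
  have hgron := le_exp_mul_add_of_hasDerivAt hrτ (Nat.cast_ne_zero.2 hm) (sq_nonneg (L * b))
    (fun u _ => hG u) hGbound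
  rw [show P r = ξ r by simp [(hPξ' r hrr).1], hU.2.2.1 (ξ r) (by linarith [hnear r hrr]),
    hU.2.2.1 (P τ) (hPnear τ hττ).le] at hgron
  have hexp : Real.exp (-(m * (τ - r)) / 2) ^ 2 = Real.exp (-m * (τ - r)) := by
    rw [← Real.exp_nat_mul]; ring_nf
  have hPτ : infDist (P τ) (closure D) ≤
      Real.exp (-(m * (τ - r)) / 2) * infDist (ξ r) (closure D) + L * b := by
    have hρ : 0 ≤ infDist (ξ r) (closure D) := infDist_nonneg
    rw [← pow_le_pow_iff_left₀ infDist_nonneg (by positivity) two_ne_zero]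
    nlinarith [mul_nonneg (mul_nonneg (Real.exp_pos (-(m * (τ - r)) / 2)).le hρ)
      (mul_nonneg hL hb0)]
  have := infDist_le_infDist_add_dist (x := ξ τ) (y := P τ) (s := closure D)
  linarith [hPdist τ hττ]

theorem IsPenalizedSol.infDist_le_quarter (hU : IsPenalty D r₀ L U) (hL : 0 ≤ L) (hr₀ : 0 < r₀)
    (hT : 0 ≤ T) (hm : m ≠ 0) (hξ : IsPenalizedSol U T w x₀ m ξ) (hx₀ : x₀ ∈ closure D)
    (hw0 : w 0 = 0) {b : ℝ}
    (hw : ∀ u v, 0 ≤ u → u ≤ v → v ≤ T → v - u ≤ 2 / m → ‖w v - w u‖ ≤ b)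
    (hb : (L + 1) * b ≤ r₀ / 16) :
    ∀ t ∈ Icc 0 T, infDist (ξ t) (closure D) ≤ r₀ / 4 := by
  set f : ℝ → ℝ := fun u => infDist (ξ u) (closure D)
  by_contra! hexit
  have hf0 : f 0 = 0 := by simp [f, hξ.apply_zero hT hw0, infDist_zero_of_mem hx₀]
  have hfc : ContinuousOn f (Icc 0 T) := (continuous_infDist_pt _).comp_continuousOn hξ.1
  obtain ⟨τ, ⟨hτ0, hτT⟩, hfτ, hbefore⟩ :=
    exists_first_hitting hfc (by rw [hf0]; positivity) hexit
  have hm' : (0 : ℝ) < m := Nat.cast_pos.2 (Nat.pos_of_ne_zero hm)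
  have hb0 : 0 ≤ b := by simpa [hw0] using hw 0 0 le_rfl le_rfl hT (by rw [sub_self]; positivity)
  set r := max 0 (τ - 2 / m)
  have hr : 0 ≤ r := le_max_left _ _
  have hrτ : r ≤ τ := max_le hτ0.le (by linarith [div_pos two_pos hm'])
  have hwin : f τ ≤ Real.exp (-(m * (τ - r)) / 2) * f r + (L + 1) * b :=
    hξ.infDist_le_exp_mul_add hU hL ⟨x₀, hx₀⟩ hm hr hrτ hτT
    (fun u hu => hbefore u ⟨hr.trans hu.1, hu.2⟩)
    (fun u hu => hw r u hr hu.1 (hu.2.trans hτT) (by linarith [hu.2, le_max_right 0 (τ - 2 / m)]))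
    (by nlinarith)
  have hdecay : Real.exp (-(m * (τ - r)) / 2) * f r ≤ r₀ / 8 := by
    rcases le_total τ (2 / m) with h | h
    · rw [show r = 0 from max_eq_left (by linarith), hf0, mul_zero]
      positivity
    · have hr' : r = τ - 2 / m := max_eq_right (by linarith)
      rw [show -(m * (τ - r)) / 2 = -1 by rw [hr']; field_simp; ring]
      nlinarith [Real.exp_neg_one_lt_half, hbefore r ⟨hr, hrτ⟩, Real.exp_pos (-1),
        (infDist_nonneg : 0 ≤ f r)]
  linarith

theorem IsPenalizedSol.norm_sub_le_osc_add_osc {φ : ℝ → Euc d}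
    (hξ : IsPenalizedSol U T w x₀ m ξ)
    (hφ : ∀ t, φ t = -(((m : ℝ) / 2) • ∫ s in (0 : ℝ)..t, gradient U (ξ s)))
    (hw : ∃ M, ∀ u ∈ Icc 0 T, ‖w u‖ ≤ M) {s t : ℝ} (hs : 0 ≤ s) (hst : s ≤ t) (ht : t ≤ T) :
    ‖φ t - φ s‖ ≤ osc ξ s t + osc w s t := by
  have hsub : Icc s t ⊆ Icc 0 T := Icc_subset_Icc hs ht
  have hφξ (u : ℝ) (hu : u ∈ Icc 0 T) : φ u = ξ u - x₀ - w u := by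
    rw [hφ, hξ.2 u hu]; abel
  obtain ⟨Mξ, hMξ⟩ := isCompact_Icc.exists_bound_of_continuousOn hξ.1
  obtain ⟨Mw, hMw⟩ := hw
  rw [hφξ t (hsub (right_mem_Icc.2 hst)), hφξ s (hsub (left_mem_Icc.2 hst)),
    show ξ t - x₀ - w t - (ξ s - x₀ - w s) = (ξ t - ξ s) - (w t - w s) by abel]
  exact (norm_sub_le _ _).trans (add_le_add
    (norm_sub_le_osc hst ⟨Mξ, fun u hu => hMξ u (hsub hu)⟩)
    (norm_sub_le_osc hst ⟨Mw, fun u hu => hMw u (hsub hu)⟩))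

end PenalizedSolution

section Cone

variable {d : ℕ} {D : Set (Euc d)} {r₀ L δ β : ℝ} {U : Euc d → ℝ}

theorem CondB.exists_forall_inner_ge (hB : CondB D δ β) {P : Set (Euc d)} {c : Euc d}
    (hP : P ⊆ frontier D) (hPc : P ⊆ ball c (δ / 2)) :
    ∃ l : Euc d, ‖l‖ ≤ 1 ∧ ∀ p ∈ P, ∀ n ∈ nsetAll D p, 1 / β ≤ ⟪l, n⟫ := by
  rcases P.eq_empty_or_nonempty with rfl | ⟨p₀, hp₀⟩
  · exact ⟨0, by simp, by simp⟩
  · obtain ⟨l, hl, hln⟩ := hB.2.2 p₀ (hP hp₀)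
    refine ⟨l, hl.le, fun p hp => hln p ⟨?_, hP hp⟩⟩
    rw [mem_ball]
    linarith [dist_triangle_right p p₀ c, mem_ball.1 (hPc hp), mem_ball.1 (hPc hp₀)]

/-- Before `σ`, the projections `proj (ξ u)` that lie on `∂D` are `δ`-close to each other, so
Condition (B) puts every `-∇U (ξ u)` in one cone. -/
theorem exists_cone_before_return (hU : IsPenalty D r₀ L U) (hr₀ : 0 < r₀) (hB : CondB D δ β)
    {proj : Euc d → Euc d}
    (hproj : ∀ x : Euc d, infDist x (closure D) < r₀ →
      proj x ∈ closure D ∧ dist x (proj x) = infDist x (closure D))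
    {ξ : ℝ → Euc d} {T a τ σ : ℝ} (hnear : ∀ u ∈ Ico a σ, infDist (ξ u) (closure D) < r₀ / 2)
    (hσT : σ ≤ T) (hτ : τ = sInf {t | t ∈ Ioc a T ∧ δ / 2 ≤ ‖proj (ξ t) - proj (ξ a)‖})
    (hσ : σ = sInf {t | t ∈ Icc τ T ∧ proj (ξ t) ∈ frontier D}) :
    ∃ l : Euc d, ‖l‖ ≤ 1 ∧ ∀ u ∈ Ico a σ, ‖gradient U (ξ u)‖ ≤ β * ⟪l, -gradient U (ξ u)⟫ := by
  have hproj' (u : ℝ) (hu : u ∈ Ico a σ) := hproj (ξ u) (by linarith [hnear u hu])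
  set S := {u | u ∈ Ico a σ ∧ 0 < infDist (ξ u) (closure D)}
  have hfront (u : ℝ) (hu : u ∈ S) : proj (ξ u) ∈ frontier D :=
    mem_frontier_of_dist_eq_infDist (hproj' u hu.1).1
      (by rw [(hproj' u hu.1).2, infDist_closure]) (by rw [← infDist_closure]; exact hu.2)
  obtain ⟨l, hl, hln⟩ := hB.exists_forall_inner_ge (P := (fun u => proj (ξ u)) '' S)
    (c := proj (ξ a)) (by rintro _ ⟨u, hu, rfl⟩; exact hfront u hu) <| by
      rintro _ ⟨u, hu, rfl⟩
      rw [mem_ball, dist_eq_norm]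
      exact norm_sub_lt_of_mem_before_return (q := fun t => proj (ξ t)) (half_pos hB.1) hτ hσ
        hu.1 (hu.1.2.le.trans hσT) (hfront u hu)
  refine ⟨l, hl, fun u hu => ?_⟩
  rcases (infDist_nonneg : 0 ≤ infDist (ξ u) (closure D)).eq_or_lt with h0 | hpos
  · have hmem : ξ u ∈ closure D :=
      (isClosed_closure.mem_iff_infDist_zero ⟨_, (hproj' u hu).1⟩).2 h0.symm
    simp [hU.gradient_eq_zero hr₀ hmem]
  · exact hU.norm_gradient_le_mul_inner (by linarith [hB.2.1]) (hnear u hu) (hproj' u hu).1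
      (hproj' u hu).2 hpos (hln _ ⟨u, ⟨hu, hpos⟩, rfl⟩)

end Cone

theorem penalization_variation_osc_bound_general
    (d : ℕ) (D : Set (Euc d))
    (r₀ δ β : ℝ) (hA : CondA D r₀) (hB : CondB D δ β)
    (L T α : ℝ) (hL : 0 < L) (hT : 0 < T) (hα : 0 < α) (hα2 : α < 1 / 2)
    (U : Euc d → ℝ) (hU : IsPenalty D r₀ L U)
    (w : ℝ → Euc d) (hw0 : w 0 = 0) (hHol : ∃ C : ℝ, IsHolder w T α C)
    (x₀ : Euc d) (hx₀ : x₀ ∈ closure D)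
    (proj : Euc d → Euc d)
    (hproj : ∀ x : Euc d, Metric.infDist x (closure D) < r₀ →
      proj x ∈ closure D ∧ dist x (proj x) = Metric.infDist x (closure D))
    (lamw : ℝ)
    (m : ℕ) (hm : 1 ≤ m)
    (hε2 : epsm w T α L m < min (δ / (180 * β * lamw)) (r₀ / 2))
    (ξ : ℝ → Euc d) (hξ : IsPenalizedSol U T w x₀ m ξ)
    (φm : ℝ → Euc d)
    (hφm : ∀ t : ℝ, φm t = -(((m : ℝ) / 2) • ∫ s in (0 : ℝ)..t, gradient U (ξ s)))
    (n : ℕ) (hn : 1 ≤ n) (Tm tm : ℕ → ℝ)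
    (hT0 : Tm 0 = sInf {t | t ∈ Set.Icc 0 T ∧ proj (ξ t) ∈ frontier D})
    (htm : ∀ k : ℕ, 1 ≤ k → k ≤ n →
      {t | t ∈ Set.Ioc (Tm (k - 1)) T ∧
        δ / 2 ≤ ‖proj (ξ t) - proj (ξ (Tm (k - 1)))‖}.Nonempty ∧
      tm k = sInf {t | t ∈ Set.Ioc (Tm (k - 1)) T ∧
        δ / 2 ≤ ‖proj (ξ t) - proj (ξ (Tm (k - 1)))‖})
    (hTm : ∀ k : ℕ, 1 ≤ k → k ≤ n →
      {t | t ∈ Set.Icc (tm k) T ∧ proj (ξ t) ∈ frontier D}.Nonempty ∧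
      Tm k = sInf {t | t ∈ Set.Icc (tm k) T ∧ proj (ξ t) ∈ frontier D}) :
    ∀ s t : ℝ, Tm (n - 1) ≤ s → s ≤ t → t ≤ Tm n →
      variationOnFromTo φm (Set.Icc 0 T) s t ≤ β * (osc ξ s t + osc w s t) := by
  have hm0 : m ≠ 0 := by omega
  obtain ⟨C, hC⟩ := hHol
  have hK := holderSemi_nonneg w T α
  have hnear : ∀ u ∈ Icc 0 T, infDist (ξ u) (closure D) ≤ r₀ / 4 :=
    hξ.infDist_le_quarter hU hL.le hA.1 hT.le hm0 hx₀ hw0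
      (fun u v hu huv hv hvu => (hC.holderSemi u v hu huv hv).trans (by gcongr))
      (add_one_mul_holderSemi_le_of_epsm_lt hα2 hm0 (hε2.trans_le (min_le_right _ _)))
  intro s t hs hst ht
  have ha : 0 ≤ Tm (n - 1) := stoppingTimes_nonneg hT0 (fun k h1 h2 => (htm k h1 h2).2)
    (fun k h1 h2 => (hTm k h1 h2).2) (n - 1) (Nat.sub_le n 1)
  have hσT : Tm n ≤ T := by
    obtain ⟨u, hu⟩ := (hTm n hn le_rfl).1
    exact (hTm n hn le_rfl).2 ▸ (csInf_le ⟨tm n, fun _ h => h.1.1⟩ hu).trans hu.1.2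
  obtain ⟨l, hl, hcone⟩ := exists_cone_before_return hU hA.1 hB hproj
    (fun u hu => by linarith [hnear u ⟨ha.trans hu.1, hu.2.le.trans hσT⟩, hA.1]) hσT
    (htm n hn le_rfl).2 (hTm n hn le_rfl).2
  have hβ : 0 ≤ β := by linarith [hB.2.1]
  calc variationOnFromTo φm (Icc 0 T) s t ≤ β * ‖φm t - φm s‖ :=
        variationOnFromTo_neg_smul_integral_le (hU.1.continuous_gradient.comp_continuousOn hξ.1)
          hφm (by positivity) hβ hl (ha.trans hs) hst (ht.trans hσT)
          fun u hu => hcone u ⟨hs.trans hu.1.le, hu.2.trans_le ht⟩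
    _ ≤ β * (osc ξ s t + osc w s t) := by
        gcongr
        exact hξ.norm_sub_le_osc_add_osc hφm ⟨_, fun u hu => hC.holderSemi.norm_le hK hα.le hw0 hu⟩
          (ha.trans hs) hst (ht.trans hσT)

/-- between consecutive stopping times, the variation of `φ^m` on `[s,t]`
is bounded by `β (Δ_{s,t}(ξ^m) + Δ_{s,t}(w))`. -/
theorem penalization_variation_osc_bound
    (d : ℕ) (hd : 1 ≤ d) (D : Set (Euc d)) (hDne : D.Nonempty) (hDopen : IsOpen D)
    (r₀ δ β : ℝ) (hA : CondA D r₀) (hB : CondB D δ β)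
    (L T α : ℝ) (hL : 0 < L) (hT : 0 < T) (hα : 0 < α) (hα2 : α < 1 / 2)
    (U : Euc d → ℝ) (hU : IsPenalty D r₀ L U)
    (w : ℝ → Euc d) (hw0 : w 0 = 0) (hHol : ∃ C : ℝ, IsHolder w T α C)
    (x₀ : Euc d) (hx₀ : x₀ ∈ closure D)
    (proj : Euc d → Euc d)
    (hproj : ∀ x : Euc d, Metric.infDist x (closure D) < r₀ →
      proj x ∈ closure D ∧ dist x (proj x) = Metric.infDist x (closure D))
    (κ : ℝ) (hκ : 0 < κ)
    (hκlip : ∀ x y : Euc d, Metric.infDist x (closure D) < r₀ / 2 →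
      Metric.infDist y (closure D) < r₀ / 2 → dist (proj x) (proj y) ≤ κ * dist x y)
    (γ lamw : ℝ) (hγ : γ = 2 * κ ^ 2 * β / r₀)
    (hlam : lamw = Real.exp (γ * (supNorm w T + δ)))
    (m : ℕ) (hm : 1 ≤ m)
    (hε1 : 0 < epsm w T α L m)
    (hε2 : epsm w T α L m < min (δ / (180 * β * lamw)) (r₀ / 2))
    (ξ : ℝ → Euc d) (hξ : IsPenalizedSol U T w x₀ m ξ)
    (φm : ℝ → Euc d)
    (hφm : ∀ t : ℝ, φm t = -(((m : ℝ) / 2) • ∫ s in (0 : ℝ)..t, gradient U (ξ s)))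
    (n : ℕ) (hn : 1 ≤ n) (Tm tm : ℕ → ℝ)
    (hT0ne : {t | t ∈ Set.Icc 0 T ∧ proj (ξ t) ∈ frontier D}.Nonempty)
    (hT0 : Tm 0 = sInf {t | t ∈ Set.Icc 0 T ∧ proj (ξ t) ∈ frontier D})
    (htm : ∀ k : ℕ, 1 ≤ k → k ≤ n →
      {t | t ∈ Set.Ioc (Tm (k - 1)) T ∧
        δ / 2 ≤ ‖proj (ξ t) - proj (ξ (Tm (k - 1)))‖}.Nonempty ∧
      tm k = sInf {t | t ∈ Set.Ioc (Tm (k - 1)) T ∧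
        δ / 2 ≤ ‖proj (ξ t) - proj (ξ (Tm (k - 1)))‖})
    (hTm : ∀ k : ℕ, 1 ≤ k → k ≤ n →
      {t | t ∈ Set.Icc (tm k) T ∧ proj (ξ t) ∈ frontier D}.Nonempty ∧
      Tm k = sInf {t | t ∈ Set.Icc (tm k) T ∧ proj (ξ t) ∈ frontier D}) :
    ∀ s t : ℝ, Tm (n - 1) ≤ s → s ≤ t → t ≤ Tm n →
      variationOnFromTo φm (Set.Icc 0 T) s t ≤ β * (osc ξ s t + osc w s t) :=
  penalization_variation_osc_bound_general d D r₀ δ β hA hB L T α hL hT hα hα2 U hU w hw0 hHol x₀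
    hx₀ proj hproj lamw m hm hε2 ξ hξ φm hφm n hn Tm tm hT0 htm hTm

end
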